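/- Let p be a prime, n a positive integer, r an integer, and j a non-negative integer. Then the sum, over all p-tuples (i_0, i_1, ..., i_{p-1}) of non-negative integers with i_0 + i_1 + ⋯ + i_{p-1} = n and i_1 + 2i_2 + ⋯ + (p-1)i_{p-1} ≡ r (mod p), of the multinomial coefficient n!/(i_0! i_1! ⋯ i_{p-1}!) times C((i_1 + 2i_2 + ⋯ + (p-1)i_{p-1} - r)/p, j), is divisible by p^[(n(p-1)-jp-1)/(p-1)]. -/
import Mathlib

open Polynomial Finset

namespace SharpAux

noncomputable def w (p : ℕ) (r : ℤ) (j : ℕ) (m : ℕ) : ℤ :=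
  if (p : ℤ) ∣ ((m : ℤ) - r) then Ring.choose (((m : ℤ) - r) / (p : ℤ)) j else 0

noncomputable def L (p : ℕ) (r : ℤ) (j : ℕ) : Polynomial ℤ →+ ℤ where
  toFun f := f.sum fun m c => c * w p r j m
  map_zero' := Polynomial.sum_zero_index _
  map_add' f g := Polynomial.sum_add_index f g (fun m c => c * w p r j m)
    (fun i => zero_mul _) (fun a b₁ b₂ => add_mul b₁ b₂ _)

lemma L_apply (p : ℕ) (r : ℤ) (j : ℕ) (f : Polynomial ℤ) :
    L p r j f = f.sum fun m c => c * w p r j m := by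
  simp only [L, AddMonoidHom.coe_mk, ZeroHom.coe_mk]

lemma L_monomial (p : ℕ) (r : ℤ) (j : ℕ) (m : ℕ) (c : ℤ) :
    L p r j (monomial m c) = c * w p r j m := by
  rw [L_apply]
  exact Polynomial.sum_monomial_index c (fun m c => c * w p r j m) (zero_mul _)

lemma L_C_mul (p : ℕ) (r : ℤ) (j : ℕ) (a : ℤ) (f : Polynomial ℤ) :
    L p r j (C a * f) = a * L p r j f := by
  rw [← smul_eq_C_mul, L_apply, L_apply,
    Polynomial.sum_smul_index f a (fun m c => c * w p r j m) (fun i => zero_mul _)]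
  simp only [Polynomial.sum_def, Finset.mul_sum, mul_assoc]

lemma L_Xpow_mul (p : ℕ) (r : ℤ) (j : ℕ) (k : ℕ) (f : Polynomial ℤ) :
    L p r j (X ^ k * f) = f.sum fun m c => c * w p r j (k + m) := by
  induction f using Polynomial.induction_on' with
  | add f g hf hg =>
    rw [mul_add, map_add, hf, hg,
      Polynomial.sum_add_index f g (fun m c => c * w p r j (k + m))
        (fun i => zero_mul _) (fun a b₁ b₂ => add_mul b₁ b₂ _)]
  | monomial m c =>
    rw [X_pow_eq_monomial, monomial_mul_monomial, one_mul, L_monomial,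
      Polynomial.sum_monomial_index c (fun m c => c * w p r j (k + m)) (zero_mul _)]

lemma w_dvd_shift (p : ℕ) (r : ℤ) (m : ℕ) :
    ((p + m : ℕ) : ℤ) - r = ((m : ℤ) - r) + p := by push_cast; ring

lemma w_step (p : ℕ) (hp : 0 < p) (r : ℤ) (j m : ℕ) :
    w p r (j+1) (p + m) - w p r (j+1) m = w p r j m := by
  have hp0 : (p : ℤ) ≠ 0 := by exact_mod_cast hp.ne'
  by_cases h : (p : ℤ) ∣ ((m : ℤ) - r)
  · obtain ⟨u, hu⟩ := h
    have h1 : (p : ℤ) ∣ ((m : ℤ) - r) := ⟨u, hu⟩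
    have h2 : (p : ℤ) ∣ (((p + m : ℕ) : ℤ) - r) :=
      ⟨u + 1, by rw [w_dvd_shift, hu]; ring⟩
    have hdiv1 : ((m : ℤ) - r) / p = u := by
      rw [hu]; exact Int.mul_ediv_cancel_left u hp0
    have hdiv2 : (((p + m : ℕ) : ℤ) - r) / p = u + 1 := by
      rw [w_dvd_shift, hu, show (p : ℤ) * u + p = p * (u + 1) by ring]
      exact Int.mul_ediv_cancel_left _ hp0
    simp only [w, if_pos h1, if_pos h2, hdiv1, hdiv2]
    rw [Ring.choose_succ_succ]; ring
  · have h2 : ¬ (p : ℤ) ∣ (((p + m : ℕ) : ℤ) - r) := by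
      intro hdd; apply h
      obtain ⟨v, hv⟩ := hdd
      rw [w_dvd_shift] at hv
      exact ⟨v - 1, by linear_combination hv⟩
    simp only [w, if_neg h, if_neg h2, sub_zero]

lemma w_step0 (p : ℕ) (hp : 0 < p) (r : ℤ) (m : ℕ) :
    w p r 0 (p + m) - w p r 0 m = 0 := by
  by_cases h : (p : ℤ) ∣ ((m : ℤ) - r)
  · have h2 : (p : ℤ) ∣ (((p + m : ℕ) : ℤ) - r) := by
      obtain ⟨u, hu⟩ := h
      exact ⟨u + 1, by rw [w_dvd_shift, hu]; ring⟩
    simp only [w, if_pos h, if_pos h2, Ring.choose_zero_right, sub_self]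
  · have h2 : ¬ (p : ℤ) ∣ (((p + m : ℕ) : ℤ) - r) := by
      intro hdd; apply h
      obtain ⟨v, hv⟩ := hdd
      rw [w_dvd_shift] at hv
      exact ⟨v - 1, by linear_combination hv⟩
    simp only [w, if_neg h, if_neg h2, sub_zero]

lemma L_key_succ (p : ℕ) (hp : 0 < p) (r : ℤ) (j : ℕ) (f : Polynomial ℤ) :
    L p r (j+1) ((X ^ p - 1) * f) = L p r j f := by
  have e : (X ^ p - 1 : Polynomial ℤ) * f = X ^ p * f - f := by ring
  rw [e, map_sub, L_Xpow_mul, L_apply, L_apply]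
  simp only [Polynomial.sum_def]
  rw [← Finset.sum_sub_distrib]
  exact Finset.sum_congr rfl fun m hm => by
    rw [← mul_sub, w_step p hp r j m]

lemma L_key_zero (p : ℕ) (hp : 0 < p) (r : ℤ) (f : Polynomial ℤ) :
    L p r 0 ((X ^ p - 1) * f) = 0 := by
  have e : (X ^ p - 1 : Polynomial ℤ) * f = X ^ p * f - f := by ring
  rw [e, map_sub, L_Xpow_mul, L_apply]
  simp only [Polynomial.sum_def]
  rw [← Finset.sum_sub_distrib]
  exact Finset.sum_eq_zero fun m hm => by
    rw [← mul_sub, w_step0 p hp r m, mul_zero]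

noncomputable def Phi (p : ℕ) : Polynomial ℤ := ∑ i ∈ range p, X ^ i

lemma Phi_mul_X_sub_one (p : ℕ) : Phi p * (X - 1) = X ^ p - 1 := geom_sum_mul X p

lemma red (p : ℕ) (hp : 0 < p) (r : ℤ) (f : Polynomial ℤ) :
    ∀ (c m j : ℕ), c ≤ m → c ≤ j →
      L p r j (Phi p ^ m * ((X - 1) ^ c * f)) = L p r (j - c) (Phi p ^ (m - c) * f) := by
  intro c
  induction c with
  | zero => intro m j _ _; simp
  | succ c ih =>
    intro m j hm hj
    obtain ⟨m', rfl⟩ : ∃ m', m = m' + 1 := ⟨m - 1, by omega⟩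
    obtain ⟨j', rfl⟩ : ∃ j', j = j' + 1 := ⟨j - 1, by omega⟩
    have e : Phi p ^ (m' + 1) * ((X - 1) ^ (c + 1) * f)
        = (X ^ p - 1) * (Phi p ^ m' * ((X - 1) ^ c * f)) := by
      rw [← Phi_mul_X_sub_one p]; ring
    rw [e, L_key_succ p hp, Nat.succ_sub_succ, Nat.succ_sub_succ]
    exact ih m' j' (by omega) (by omega)

lemma red0 (p : ℕ) (hp : 0 < p) (r : ℤ) (f : Polynomial ℤ) :
    ∀ (j m c : ℕ), j + 1 ≤ m → j + 1 ≤ c →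
      L p r j (Phi p ^ m * ((X - 1) ^ c * f)) = 0 := by
  intro j
  induction j with
  | zero =>
    intro m c hm hc
    obtain ⟨m', rfl⟩ : ∃ m', m = m' + 1 := ⟨m - 1, by omega⟩
    obtain ⟨c', rfl⟩ : ∃ c', c = c' + 1 := ⟨c - 1, by omega⟩
    have e : Phi p ^ (m' + 1) * ((X - 1) ^ (c' + 1) * f)
        = (X ^ p - 1) * (Phi p ^ m' * ((X - 1) ^ c' * f)) := by
      rw [← Phi_mul_X_sub_one p]; ring
    rw [e, L_key_zero p hp]
  | succ j ih =>
    intro m c hm hc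
    obtain ⟨m', rfl⟩ : ∃ m', m = m' + 1 := ⟨m - 1, by omega⟩
    obtain ⟨c', rfl⟩ : ∃ c', c = c' + 1 := ⟨c - 1, by omega⟩
    have e : Phi p ^ (m' + 1) * ((X - 1) ^ (c' + 1) * f)
        = (X ^ p - 1) * (Phi p ^ m' * ((X - 1) ^ c' * f)) := by
      rw [← Phi_mul_X_sub_one p]; ring
    rw [e, L_key_succ p hp, ih m' c' (by omega) (by omega)]

lemma phi_expand : ∀ P : ℕ,
    (∑ i ∈ range P, (X : Polynomial ℤ) ^ i)
      = ∑ b ∈ range P, C ((P.choose (b+1) : ℤ)) * (X - 1) ^ b := by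
  intro P
  induction P with
  | zero => simp
  | succ P ih =>
    rw [sum_range_succ, ih]
    have hx : (X : Polynomial ℤ) ^ P = ∑ b ∈ range (P+1), C ((P.choose b : ℤ)) * (X - 1) ^ b := by
      conv_lhs => rw [show (X : Polynomial ℤ) = (X - 1) + 1 by ring]
      rw [add_pow]
      refine Finset.sum_congr rfl fun b hb => ?_
      rw [one_pow, mul_one]
      rw [mul_comm]
      congr 1
    rw [hx]
    have h0 : (∑ b ∈ range P, C ((P.choose (b+1) : ℤ)) * (X - 1) ^ b)
        = ∑ b ∈ range (P+1), C ((P.choose (b+1) : ℤ)) * (X - 1) ^ b := by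
      rw [sum_range_succ, Nat.choose_succ_self]
      simp
    rw [h0, ← Finset.sum_add_distrib]
    refine Finset.sum_congr rfl fun b hb => ?_
    rw [← add_mul, ← C_add]
    have : ((P.choose (b+1) : ℤ)) + (P.choose b : ℤ) = (((P+1).choose (b+1) : ℕ) : ℤ) := by
      rw [Nat.choose_succ_succ]
      push_cast; ring
    rw [this]

/-- the exponent -/
def E (p n j : ℕ) : ℕ := (((n : ℤ) * ((p : ℤ) - 1) - j * p - 1) / ((p : ℤ) - 1)).toNat

lemma A1 (p n j : ℕ) (hp : 2 ≤ p) (h : 1 ≤ E p n j) : j + 2 ≤ n := by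
  unfold E at h
  set d : ℤ := (p : ℤ) - 1 with hd
  have hd1 : (1 : ℤ) ≤ d := by
    have : (2 : ℤ) ≤ (p : ℤ) := by exact_mod_cast hp
    omega
  have h1 : (1 : ℤ) ≤ ((n : ℤ) * d - j * p - 1) / d := by omega
  have h2 : (1 : ℤ) * d ≤ (n : ℤ) * d - j * p - 1 :=
    (Int.le_ediv_iff_mul_le (by omega)).mp h1
  have hp' : (p : ℤ) = d + 1 := by omega
  have key : ((j : ℤ) + 1) ≤ ((n : ℤ) - j - 1) * d := by nlinarith
  have hn : (0 : ℤ) ≤ (j : ℤ) := Int.natCast_nonneg j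
  have : (1 : ℤ) ≤ (n : ℤ) - j - 1 := by nlinarith
  have : (j : ℤ) + 2 ≤ (n : ℤ) := by omega
  exact_mod_cast this

lemma A2 (p n j b : ℕ) (hp : 2 ≤ p) (hb : b ≤ j) (hjn : j + 2 ≤ n) :
    E p n j ≤ 1 + E p (n - 1 - b) (j - b) := by
  unfold E
  set d : ℤ := (p : ℤ) - 1 with hd
  have hd1 : (1 : ℤ) ≤ d := by
    have : (2 : ℤ) ≤ (p : ℤ) := by exact_mod_cast hp
    omega
  have hc1 : ((n - 1 - b : ℕ) : ℤ) = (n : ℤ) - 1 - b := by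
    have : b + 2 ≤ n := by omega
    push_cast [Nat.sub_sub, Nat.cast_sub (show 1 + b ≤ n by omega)]
    ring
  have hc2 : ((j - b : ℕ) : ℤ) = (j : ℤ) - b := by
    push_cast [Nat.cast_sub hb]; ring
  set N : ℤ := (n : ℤ) * d - j * p - 1 with hN
  set N' : ℤ := ((n - 1 - b : ℕ) : ℤ) * d - ((j - b : ℕ) : ℤ) * p - 1 with hN'
  have hNN : N = N' + (d - b) := by
    rw [hN, hN', hc1, hc2, hd]
    ring
  have hle : N ≤ N' + d := by
    have : (0 : ℤ) ≤ (b : ℤ) := Int.natCast_nonneg b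
    omega
  have h1 : N / d ≤ (N' + d) / d := Int.ediv_le_ediv (by omega) hle
  have h2 : (N' + d) / d = N' / d + 1 := by
    have := Int.add_mul_ediv_right N' 1 (show d ≠ 0 by omega)
    rw [one_mul] at this
    omega
  have h3 : N / d ≤ N' / d + 1 := by omega
  omega

lemma A3 (p n j : ℕ) (hp : 2 ≤ p) (hb : p - 1 ≤ j) (hjn : j + 2 ≤ n) :
    E p n j = E p (n - 1 - (p - 1)) (j - (p - 1)) := by
  have hc0 : ((p - 1 : ℕ) : ℤ) = (p : ℤ) - 1 := by
    push_cast [Nat.cast_sub (show 1 ≤ p by omega)]; ring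
  have hc1 : ((n - 1 - (p - 1) : ℕ) : ℤ) = (n : ℤ) - 1 - ((p : ℤ) - 1) := by
    have h1 : 1 + (p - 1) ≤ n := by omega
    push_cast [Nat.sub_sub, Nat.cast_sub h1, Nat.cast_sub (show 1 ≤ p by omega)]
    ring
  have hc2 : ((j - (p - 1) : ℕ) : ℤ) = (j : ℤ) - ((p : ℤ) - 1) := by
    push_cast [Nat.cast_sub hb, Nat.cast_sub (show 1 ≤ p by omega)]; ring
  unfold E
  congr 1
  rw [hc1, hc2]
  ring

lemma main (p : ℕ) (hp : p.Prime) : ∀ n : ℕ, ∀ (j : ℕ) (r : ℤ) (f : Polynomial ℤ),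
    (p : ℤ) ^ (E p n j) ∣ L p r j (Phi p ^ n * f) := by
  intro n
  induction n using Nat.strong_induction_on with
  | _ n IH =>
    intro j r f
    by_cases hE : E p n j = 0
    · rw [hE, pow_zero]; exact one_dvd _
    have hp2 : 2 ≤ p := hp.two_le
    have hp0 : 0 < p := by omega
    have h1 : 1 ≤ E p n j := Nat.one_le_iff_ne_zero.mpr hE
    have hjn : j + 2 ≤ n := A1 p n j hp2 h1
    have hsplit : Phi p ^ n * f
        = ∑ b ∈ range p, C ((p.choose (b+1) : ℤ)) * (Phi p ^ (n-1) * ((X - 1) ^ b * f)) := by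
      have hn1 : n = (n - 1) + 1 := by omega
      calc Phi p ^ n * f = Phi p ^ (n-1) * Phi p * f := by
            conv_lhs => rw [hn1, pow_succ]
        _ = Phi p ^ (n-1) * (∑ b ∈ range p, C ((p.choose (b+1) : ℤ)) * (X - 1) ^ b) * f := by
            rw [show Phi p = ∑ b ∈ range p, C ((p.choose (b+1) : ℤ)) * (X - 1) ^ b from
              phi_expand p]
        _ = ∑ b ∈ range p, C ((p.choose (b+1) : ℤ)) * (Phi p ^ (n-1) * ((X - 1) ^ b * f)) := by
            rw [Finset.mul_sum, Finset.sum_mul]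
            exact Finset.sum_congr rfl fun b hb => by ring
    rw [hsplit, map_sum]
    refine Finset.dvd_sum fun b hb => ?_
    rw [L_C_mul]
    rcases le_or_gt b j with hbj | hjb
    · -- b ≤ j : reduce b steps
      rw [red p hp0 r f b (n-1) j (by omega) hbj]
      rcases lt_or_eq_of_le (show b + 1 ≤ p from Finset.mem_range.mp hb) with hblt | hbeq
      · -- b + 1 < p : choose divisible by p
        have hdvd : (p : ℤ) ∣ (p.choose (b+1) : ℤ) := by
          exact_mod_cast Int.natCast_dvd_natCast.mpr
            (Nat.Prime.dvd_choose_self hp (Nat.succ_ne_zero b) hblt)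
        have hIH := IH (n - 1 - b) (by omega) (j - b) r f
        have := mul_dvd_mul hdvd hIH
        refine dvd_trans ?_ this
        rw [← pow_succ']
        exact pow_dvd_pow _ (by
          have := A2 p n j b hp2 hbj hjn
          omega)
      · -- b = p - 1
        have hb' : b = p - 1 := by omega
        have hch : (p.choose (b+1) : ℤ) = 1 := by
          rw [show b + 1 = p by omega, Nat.choose_self]; norm_num
        rw [hch, one_mul]
        have hIH := IH (n - 1 - b) (by omega) (j - b) r f
        rw [show E p n j = E p (n - 1 - b) (j - b) by
          rw [hb']; exact A3 p n j hp2 (by omega) hjn]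
        exact hIH
    · -- j < b : vanishes
      rw [red0 p hp0 r f j (n-1) b (by omega) (by omega), mul_zero]
      exact dvd_zero _

end SharpAux

open SharpAux Polynomial Finset in
/-- **Sharp Congruence II** (Theorem 1.2).  For a prime `p`, a positive integer `n`,
an integer `r` and `j ≥ 0`, the sum over all `p`-tuples `(i₀, …, i_{p-1})` of
non-negative integers with `i₀ + ⋯ + i_{p-1} = n` and `i₁ + 2i₂ + ⋯ ≡ r (mod p)`
of `(n choose i₀ … i_{p-1}) · C((i₁ + 2i₂ + ⋯ - r)/p, j)` is divisible by
`p^[(n(p-1)-jp-1)/(p-1)]`, where `[x]` is the floor of `x` when `x ≥ 0` and `0`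
otherwise. -/
theorem multinomial_sharp_congruence (p : ℕ) (hp : p.Prime) (n : ℕ) (hn : 0 < n)
    (r : ℤ) (j : ℕ) :
    (p : ℤ) ^ ((((n : ℤ) * ((p : ℤ) - 1) - j * p - 1) / ((p : ℤ) - 1)).toNat) ∣
      ∑ i ∈ (Finset.Nat.antidiagonalTuple p n).filter
          (fun i : Fin p → ℕ => (∑ t : Fin p, (t : ℤ) * (i t : ℤ)) ≡ r [ZMOD (p : ℤ)]),
        (Nat.multinomial Finset.univ i : ℤ) *
          Ring.choose (((∑ t : Fin p, (t : ℤ) * (i t : ℤ)) - r) / (p : ℤ)) j := by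
  have key := main p hp n j r 1
  rw [mul_one] at key
  have hE : E p n j = (((n : ℤ) * ((p : ℤ) - 1) - j * p - 1) / ((p : ℤ) - 1)).toNat := rfl
  rw [hE] at key
  have hPhi : Phi p = ∑ t : Fin p, (X : Polynomial ℤ) ^ (t : ℕ) := by
    rw [Phi]
    exact (Fin.sum_univ_eq_sum_range (fun i => (X : Polynomial ℤ) ^ i) p).symm
  have hpow : Phi p ^ n = ∑ k ∈ (univ : Finset (Fin p)).piAntidiag n,
      ((Nat.multinomial univ k : ℕ) : Polynomial ℤ) * ∏ t : Fin p,
        ((X : Polynomial ℤ) ^ (t : ℕ)) ^ (k t) := by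
    rw [hPhi, Finset.sum_pow_eq_sum_piAntidiag]
  have hLval : L p r j (Phi p ^ n) = ∑ k ∈ (univ : Finset (Fin p)).piAntidiag n,
      (Nat.multinomial univ k : ℤ) * w p r j (∑ t : Fin p, (t : ℕ) * k t) := by
    rw [hpow, map_sum]
    refine Finset.sum_congr rfl fun k hk => ?_
    have h1 : (∏ t : Fin p, ((X : Polynomial ℤ) ^ (t : ℕ)) ^ (k t))
        = (X : Polynomial ℤ) ^ (∑ t : Fin p, (t : ℕ) * k t) := by
      simp_rw [← pow_mul]
      exact Finset.prod_pow_eq_pow_sum univ (fun t : Fin p => (t : ℕ) * k t) X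
    rw [h1, show ((Nat.multinomial univ k : ℕ) : Polynomial ℤ)
        = C ((Nat.multinomial univ k : ℕ) : ℤ) by simp,
      L_C_mul, X_pow_eq_monomial, L_monomial, one_mul]
  have hset : Finset.Nat.antidiagonalTuple p n = (univ : Finset (Fin p)).piAntidiag n := by
    ext x
    simp [Finset.Nat.mem_antidiagonalTuple, Finset.mem_piAntidiag]
  have hsum : (∑ i ∈ (Finset.Nat.antidiagonalTuple p n).filter
          (fun i : Fin p → ℕ => (∑ t : Fin p, (t : ℤ) * (i t : ℤ)) ≡ r [ZMOD (p : ℤ)]),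
        (Nat.multinomial Finset.univ i : ℤ) *
          Ring.choose (((∑ t : Fin p, (t : ℤ) * (i t : ℤ)) - r) / (p : ℤ)) j)
      = L p r j (Phi p ^ n) := by
    rw [hLval, hset, Finset.sum_filter]
    refine Finset.sum_congr rfl fun k hk => ?_
    have hW : ((∑ t : Fin p, (t : ℕ) * k t : ℕ) : ℤ) = ∑ t : Fin p, (t : ℤ) * (k t : ℤ) := by
      push_cast
      rfl
    have hcond : ((∑ t : Fin p, (t : ℤ) * (k t : ℤ)) ≡ r [ZMOD (p : ℤ)])
        ↔ (p : ℤ) ∣ ((∑ t : Fin p, (t : ℤ) * (k t : ℤ)) - r) := by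
      rw [Int.modEq_iff_dvd, dvd_sub_comm]
    rw [w, hW]
    by_cases h : (p : ℤ) ∣ ((∑ t : Fin p, (t : ℤ) * (k t : ℤ)) - r)
    · rw [if_pos h, if_pos (hcond.mpr h)]
    · rw [if_neg h, if_neg (fun hc => h (hcond.mp hc)), mul_zero]
  rw [hsum]
  exact key
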